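/- Fix a ground truth Z ∈ O(d)^{⊗n} and let N_ε := {S ∈ ℝ^{nd×d} : d_F(S, Z) ≤ ε√n}. If X, Y ∈ N_ε with X, Y ∈ O(d)^{⊗n}, Q = sgn(YᵀX), and ε ≤ 1/√2, then ‖Zᵀ(X − YQ)‖_F ≤ 2ε√n · d_F(X, Y). -/

import Mathlib

open Matrix MeasureTheory ProbabilityTheory

noncomputable section

/-- Frobenius norm of a real matrix. -/
def frob {m k : Type*} [Fintype m] [Fintype k] (A : Matrix m k ℝ) : ℝ :=
  Real.sqrt (∑ i, ∑ j, (A i j) ^ 2)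

/-- Spectral (operator) norm of a real matrix: the `ℓ² → ℓ²` operator norm. -/
def spec {m k : Type*} [Fintype m] [Fintype k] [DecidableEq k] (A : Matrix m k ℝ) : ℝ :=
  ‖LinearMap.toContinuousLinearMap (Matrix.toEuclideanLin A)‖

/-- Smallest singular value of a real matrix. -/
def sigmaMin {m k : Type*} [Fintype m] [Fintype k] [DecidableEq k] (A : Matrix m k ℝ) : ℝ :=
  ⨅ x : {x : EuclideanSpace ℝ k // ‖x‖ = 1}, ‖Matrix.toEuclideanLin A x.1‖

/-- Nuclear norm (sum of singular values) of a square real matrix. -/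
def nuclearNorm {d : ℕ} (A : Matrix (Fin d) (Fin d) ℝ) : ℝ :=
  ∑ i, Real.sqrt ((by simpa using Matrix.isHermitian_conjTranspose_mul_self A : (Aᵀ * A).IsHermitian).eigenvalues i)

/-- `Q` is a `d × d` real orthogonal matrix. -/
def IsOrtho {d : ℕ} (Q : Matrix (Fin d) (Fin d) ℝ) : Prop :=
  Qᵀ * Q = 1 ∧ Q * Qᵀ = 1

/-- The square root `PosSemidef.sqrt` of a positive semidefinite real matrix, as defined in the
older Mathlib (removed since). -/
def psdSqrt {d : ℕ} {M : Matrix (Fin d) (Fin d) ℝ} (hM : M.PosSemidef) : Matrix (Fin d) (Fin d) ℝ :=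
  hM.1.eigenvectorUnitary.1 * diagonal ((↑) ∘ (Real.sqrt ∘ hM.1.eigenvalues)) *
    (star hM.1.eigenvectorUnitary : Matrix (Fin d) (Fin d) ℝ)

open scoped Classical in
/-- The matrix sign function `sgn(A) = A (AᵀA)^{-1/2} = U Vᵀ` for `A = U Σ Vᵀ`
(junk value if `AᵀA` is not positive semidefinite, which never happens over `ℝ`). -/
def msgn {d : ℕ} (A : Matrix (Fin d) (Fin d) ℝ) : Matrix (Fin d) (Fin d) ℝ :=
  if h : (Aᵀ * A).PosSemidef then A * (psdSqrt h)⁻¹ else 1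

/-- The `i`-th `d × d` block of an `nd × d` block matrix. -/
def blk {d n : ℕ} (X : Matrix (Fin n × Fin d) (Fin d) ℝ) (i : Fin n) :
    Matrix (Fin d) (Fin d) ℝ :=
  Matrix.of fun a b => X (i, a) b

/-- `X ∈ O(d)^{⊗n}`: every `d × d` block of `X` is orthogonal. -/
def BlockOrtho {d n : ℕ} (X : Matrix (Fin n × Fin d) (Fin d) ℝ) : Prop :=
  ∀ i, IsOrtho (blk X i)

/-- Blockwise matrix sign function on `nd × d` block matrices. -/
def bsgn {d n : ℕ} (X : Matrix (Fin n × Fin d) (Fin d) ℝ) :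
    Matrix (Fin n × Fin d) (Fin d) ℝ :=
  Matrix.of fun p b => msgn (blk X p.1) p.2 b

/-- `d_F(X, Y) = min_{Q ∈ O(d)} ‖X - Y Q‖_F`. -/
def dF {d n : ℕ} (X Y : Matrix (Fin n × Fin d) (Fin d) ℝ) : ℝ :=
  ⨅ Q : {Q : Matrix (Fin d) (Fin d) ℝ // IsOrtho Q}, frob (X - Y * Q.1)

/-- The `(i, j)` block of an `nd × nd` block matrix. -/
def blk2 {d n : ℕ} (A : Matrix (Fin n × Fin d) (Fin n × Fin d) ℝ) (i j : Fin n) :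
    Matrix (Fin d) (Fin d) ℝ :=
  Matrix.of fun a b => A (i, a) (j, b)

/-- The `l`-th `nd × d` block column of an `nd × nd` block matrix. -/
def bcol {d n : ℕ} (W : Matrix (Fin n × Fin d) (Fin n × Fin d) ℝ) (l : Fin n) :
    Matrix (Fin n × Fin d) (Fin d) ℝ :=
  Matrix.of fun p b => W p (l, b)

/-- Projection onto the tangent space of `O(d)` at `X`: `P_{T_X}(G) = (G - X Gᵀ X)/2`. -/
def tanProj {d : ℕ} (X G : Matrix (Fin d) (Fin d) ℝ) : Matrix (Fin d) (Fin d) ℝ :=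
  (1 / 2 : ℝ) • (G - X * Gᵀ * X)

/-- The `i`-th block of the Euclidean gradient: `G_i = ∑_{j ≠ i} (X_i - A_{ij} X_j)`. -/
def Gblk {d n : ℕ} (A : Matrix (Fin n × Fin d) (Fin n × Fin d) ℝ)
    (X : Matrix (Fin n × Fin d) (Fin d) ℝ) (i : Fin n) : Matrix (Fin d) (Fin d) ℝ :=
  ∑ j ∈ Finset.univ.erase i, (blk X i - blk2 A i j * blk X j)

/-- One Riemannian gradient step before retraction:
`F_i = X_i - μ P_{T_{X_i}}(G_i)`, assembled as an `nd × d` block matrix. -/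
def Fstep {d n : ℕ} (A : Matrix (Fin n × Fin d) (Fin n × Fin d) ℝ) (μ : ℝ)
    (X : Matrix (Fin n × Fin d) (Fin d) ℝ) : Matrix (Fin n × Fin d) (Fin d) ℝ :=
  Matrix.of fun p b => (blk X p.1 - μ • tanProj (blk X p.1) (Gblk A X p.1)) p.2 b

/-- `Y` is an orthonormal matrix of eigenvectors for the top `d` eigenvalues of the
symmetric matrix `A`: its columns are orthonormal, its range is `A`-invariant, and the
Rayleigh quotient on its range dominates the Rayleigh quotient on its orthogonal
complement. -/
def IsTopEigvecs {d n : ℕ} (A : Matrix (Fin n × Fin d) (Fin n × Fin d) ℝ)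
    (Y : Matrix (Fin n × Fin d) (Fin d) ℝ) : Prop :=
  Yᵀ * Y = 1 ∧ (∃ Λ : Matrix (Fin d) (Fin d) ℝ, A * Y = Y * Λ) ∧
  ∀ v w : (Fin n × Fin d) → ℝ, (∃ c : Fin d → ℝ, v = Y.mulVec c) → Yᵀ.mulVec w = 0 →
    (w ⬝ᵥ w) * (v ⬝ᵥ A.mulVec v) ≥ (v ⬝ᵥ v) * (w ⬝ᵥ A.mulVec w)

/-- `W` is the symmetric block Gaussian noise matrix: `W` is symmetric, its diagonal
blocks vanish, each entry in an off-diagonal block `W_{ij}` (`i < j`) is standard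
Gaussian, and all these entries (over all blocks with `i < j`) are mutually
independent. -/
def IsGaussianNoise {d n : ℕ} {Ω : Type*} [MeasurableSpace Ω] (P : Measure Ω)
    (W : Ω → Matrix (Fin n × Fin d) (Fin n × Fin d) ℝ) : Prop :=
  (∀ p q, Measurable fun ω => W ω p q) ∧
  (∀ ω, (W ω)ᵀ = W ω) ∧
  (∀ ω (i : Fin n) (a b : Fin d), W ω (i, a) (i, b) = 0) ∧
  (∀ (i j : Fin n) (a b : Fin d), i < j →
    P.map (fun ω => W ω (i, a) (j, b)) = gaussianReal 0 1) ∧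
  iIndepFun
    (fun (e : {x : (Fin n × Fin d) × (Fin n × Fin d) // x.1.1 < x.2.1}) ω =>
      W ω e.1.1 e.1.2) P

/-- Leave-one-out noise: set the `l`-th block row and block column of `W` to zero. -/
def looNoise {d n : ℕ} (W : Matrix (Fin n × Fin d) (Fin n × Fin d) ℝ) (l : Fin n) :
    Matrix (Fin n × Fin d) (Fin n × Fin d) ℝ :=
  Matrix.of fun p q => if p.1 = l ∨ q.1 = l then 0 else W p q

/-- The Newton–Schulz iteration `S_0 = A`, `S_{t+1} = ½ S_t (3 I - S_tᵀ S_t)`. -/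
def nsIter {d : ℕ} (A : Matrix (Fin d) (Fin d) ℝ) : ℕ → Matrix (Fin d) (Fin d) ℝ
  | 0 => A
  | (t + 1) => (1 / 2 : ℝ) • (nsIter A t * ((3 : ℝ) • (1 : Matrix (Fin d) (Fin d) ℝ) - (nsIter A t)ᵀ * nsIter A t))


/-!
Write `Δ = X - YQ` with `Q = sgn(YᵀX)`. Since `Q` solves the orthogonal Procrustes problem,
`‖Δ‖_F = d_F(X, Y)`, and `QᵀYᵀX = |YᵀX|` is symmetric; hence `ΔᵀΔ = 2(n·1 - QᵀYᵀX)` and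
`‖YᵀΔ‖_F = ‖ΔᵀΔ‖_F / 2 ≤ d_F(X, Y)² / 2`. Splitting `Zᵀ = (Z - YQ')ᵀ + Q'ᵀYᵀ` with `Q'` optimal
for `d_F(Z, Y)` gives `‖ZᵀΔ‖_F ≤ ε√n · d_F(X, Y) + d_F(X, Y)² / 2`, and `d_F(X, Y) ≤ 2ε√n` by the
triangle inequality. The hypothesis `ε ≤ 1/√2` is what makes `YᵀX` invertible, so that
`sgn(YᵀX)` is orthogonal: if `YᵀXu = 0`, then with `X ≈ ZQ₁`, `Z ≈ YQ₂` and `w = Q₂Q₁u`,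
`0 = ⟨Yw, Xu⟩ ≥ (n - ‖Z - YQ₂‖_F²/2 - √n‖X - ZQ₁‖_F)|u|² ≥ (3/4 - 1/√2) n |u|²`.
-/

section Frobenius

variable {l m k : Type*} [Fintype l] [Fintype m] [Fintype k]

attribute [local instance] Matrix.frobeniusNormedAddCommGroup Matrix.frobeniusNormedSpace

lemma frob_eq_norm (A : Matrix m k ℝ) : frob A = ‖A‖ := by
  rw [frob, Matrix.frobenius_norm_def, Real.sqrt_eq_rpow]
  simp

lemma frob_nonneg (A : Matrix m k ℝ) : 0 ≤ frob A := Real.sqrt_nonneg _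

lemma sq_frob (A : Matrix m k ℝ) : frob A ^ 2 = ∑ i, ∑ j, A i j ^ 2 :=
  Real.sq_sqrt (by positivity)

lemma frob_add_le (A B : Matrix m k ℝ) : frob (A + B) ≤ frob A + frob B := by
  simpa only [frob_eq_norm] using norm_add_le A B

lemma frob_sub_comm (A B : Matrix m k ℝ) : frob (A - B) = frob (B - A) := by
  simpa only [frob_eq_norm] using norm_sub_rev A B

lemma frob_smul (r : ℝ) (A : Matrix m k ℝ) : frob (r • A) = |r| * frob A := by
  simpa only [frob_eq_norm, Real.norm_eq_abs] using norm_smul r A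

lemma frob_mul_le (A : Matrix l m ℝ) (B : Matrix m k ℝ) : frob (A * B) ≤ frob A * frob B := by
  simpa only [frob_eq_norm] using Matrix.frobenius_norm_mul A B

lemma frob_transpose (A : Matrix m k ℝ) : frob Aᵀ = frob A := by
  simpa only [frob_eq_norm] using Matrix.frobenius_norm_transpose A

lemma sq_frob_eq_trace (A : Matrix m k ℝ) : frob A ^ 2 = trace (Aᵀ * A) := by
  rw [sq_frob, Finset.sum_comm]
  simp [trace, Matrix.mul_apply, sq]

lemma trace_mul_le_frob_mul_frob (A : Matrix m k ℝ) (B : Matrix k m ℝ) :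
    trace (A * B) ≤ frob A * frob B := by
  have h := Real.sum_mul_le_sqrt_mul_sqrt (Finset.univ : Finset (m × k))
    (fun p => A p.1 p.2) (fun p => B p.2 p.1)
  simp only [← Finset.univ_product_univ, Finset.sum_product] at h
  rw [← frob_transpose B]
  simpa [trace, Matrix.mul_apply, frob] using h

lemma frob_eq_of_transpose_mul_self_eq {A : Matrix m k ℝ} {B : Matrix l k ℝ}
    (h : Aᵀ * A = Bᵀ * B) : frob A = frob B := by
  rw [← Real.sqrt_sq (frob_nonneg A), ← Real.sqrt_sq (frob_nonneg B), sq_frob_eq_trace,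
    sq_frob_eq_trace, h]

lemma frob_mul_left_of_transpose_mul_self [DecidableEq m] {Q : Matrix m m ℝ} (hQ : Qᵀ * Q = 1)
    (A : Matrix m k ℝ) : frob (Q * A) = frob A := by
  refine frob_eq_of_transpose_mul_self_eq ?_
  rw [transpose_mul, Matrix.mul_assoc, ← Matrix.mul_assoc Qᵀ, hQ, Matrix.one_mul]

lemma frob_mul_right_of_mul_transpose_self [DecidableEq k] {R : Matrix k k ℝ} (hR : R * Rᵀ = 1)
    (A : Matrix m k ℝ) : frob (A * R) = frob A := by
  rw [← frob_transpose, transpose_mul, frob_mul_left_of_transpose_mul_self (by simpa using hR),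
    frob_transpose]

lemma dotProduct_mulVec_self_le (A : Matrix m k ℝ) (v : k → ℝ) :
    (A *ᵥ v) ⬝ᵥ (A *ᵥ v) ≤ frob A ^ 2 * (v ⬝ᵥ v) := by
  rw [sq_frob, Finset.sum_mul]
  simp only [dotProduct, mulVec, ← sq]
  exact Finset.sum_le_sum fun i _ => Finset.sum_mul_sq_le_sq_mul_sq _ _ _

end Frobenius

section Orthogonal

variable {d : ℕ}

lemma isOrtho_one : IsOrtho (1 : Matrix (Fin d) (Fin d) ℝ) := ⟨by simp, by simp⟩

lemma isOrtho_of_transpose_mul_self {Q : Matrix (Fin d) (Fin d) ℝ} (h : Qᵀ * Q = 1) :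
    IsOrtho Q :=
  ⟨h, mul_eq_one_comm.mp h⟩

lemma IsOrtho.transpose {Q : Matrix (Fin d) (Fin d) ℝ} (hQ : IsOrtho Q) : IsOrtho Qᵀ :=
  ⟨by simpa using hQ.2, by simpa using hQ.1⟩

lemma IsOrtho.mul {Q R : Matrix (Fin d) (Fin d) ℝ} (hQ : IsOrtho Q) (hR : IsOrtho R) :
    IsOrtho (Q * R) :=
  isOrtho_of_transpose_mul_self <| by
    rw [transpose_mul, Matrix.mul_assoc, ← Matrix.mul_assoc Qᵀ, hQ.1, Matrix.one_mul, hR.1]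

lemma isCompact_setOf_isOrtho : IsCompact {Q : Matrix (Fin d) (Fin d) ℝ | IsOrtho Q} := by
  have hclosed : IsClosed {Q : Matrix (Fin d) (Fin d) ℝ | IsOrtho Q} :=
    (isClosed_eq (continuous_id.matrix_transpose.matrix_mul continuous_id) continuous_const).inter
      (isClosed_eq (continuous_id.matrix_mul continuous_id.matrix_transpose) continuous_const)
  refine (isCompact_univ_pi fun _ => isCompact_univ_pi fun _ =>
    isCompact_Icc (a := (-1 : ℝ)) (b := 1)).of_isClosed_subset
    hclosed fun (Q : Matrix (Fin d) (Fin d) ℝ) hQ i _ j _ => ?_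
  have hcol : ∑ k, Q k j ^ 2 = 1 := by
    simpa [Matrix.mul_apply, sq] using congrFun₂ hQ.1 j j
  have hle : Q i j ^ 2 ≤ 1 :=
    hcol ▸ Finset.single_le_sum (fun k _ => sq_nonneg (Q k j)) (Finset.mem_univ i)
  exact abs_le.mp (abs_le_one_iff_mul_self_le_one.mpr (by simpa [sq] using hle))

instance : Nonempty {Q : Matrix (Fin d) (Fin d) ℝ // IsOrtho Q} := ⟨⟨1, isOrtho_one⟩⟩

variable {m : Type*} [Fintype m]

lemma frob_sub_mul_comm {Q : Matrix (Fin d) (Fin d) ℝ} (hQ : IsOrtho Q)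
    (X Y : Matrix m (Fin d) ℝ) : frob (X - Y * Q) = frob (Y - X * Qᵀ) := by
  rw [← frob_mul_right_of_mul_transpose_self hQ.2 (Y - X * Qᵀ), Matrix.sub_mul, Matrix.mul_assoc,
    hQ.1, Matrix.mul_one, frob_sub_comm]

end Orthogonal

section MatrixSign

variable {d : ℕ}

lemma posSemidef_transpose_mul_self (A : Matrix (Fin d) (Fin d) ℝ) : (Aᵀ * A).PosSemidef := by
  simpa using Matrix.posSemidef_conjTranspose_mul_self A

lemma psdSqrt_mul_self {M : Matrix (Fin d) (Fin d) ℝ} (hM : M.PosSemidef) :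
    psdSqrt hM * psdSqrt hM = M := by
  set U := (hM.1.eigenvectorUnitary : Matrix (Fin d) (Fin d) ℝ)
  have hUU : star U * U = 1 := Matrix.mem_unitaryGroup_iff'.mp hM.1.eigenvectorUnitary.2
  have hD : diagonal ((↑) ∘ (Real.sqrt ∘ hM.1.eigenvalues)) *
      diagonal ((↑) ∘ (Real.sqrt ∘ hM.1.eigenvalues)) =
      diagonal (RCLike.ofReal ∘ hM.1.eigenvalues : Fin d → ℝ) := by
    rw [diagonal_mul_diagonal]
    congr 1
    funext i
    simp [Real.mul_self_sqrt (hM.eigenvalues_nonneg i)]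
  have hM' := hM.1.spectral_theorem
  rw [Unitary.conjStarAlgAut_apply] at hM'
  conv_rhs => rw [hM']
  simp only [psdSqrt, Matrix.mul_assoc]
  rw [← Matrix.mul_assoc (star U) U, hUU, Matrix.one_mul, ← Matrix.mul_assoc _ _ (star U), hD]

lemma posSemidef_psdSqrt {M : Matrix (Fin d) (Fin d) ℝ} (hM : M.PosSemidef) :
    (psdSqrt hM).PosSemidef := by
  simpa [psdSqrt, Matrix.star_eq_conjTranspose, Function.comp_def] using
    (Matrix.posSemidef_diagonal_iff.mpr fun i => Real.sqrt_nonneg (hM.1.eigenvalues i)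
      ).mul_mul_conjTranspose_same (hM.1.eigenvectorUnitary : Matrix (Fin d) (Fin d) ℝ)

lemma transpose_psdSqrt {M : Matrix (Fin d) (Fin d) ℝ} (hM : M.PosSemidef) :
    (psdSqrt hM)ᵀ = psdSqrt hM := by
  simp [psdSqrt, Matrix.star_eq_conjTranspose, Matrix.transpose_mul, Matrix.mul_assoc]

/-- The matrix absolute value `|A| = (AᵀA)^{1/2}`, so that `sgn(A) = A |A|⁻¹`. -/
def matAbs (A : Matrix (Fin d) (Fin d) ℝ) : Matrix (Fin d) (Fin d) ℝ :=
  psdSqrt (posSemidef_transpose_mul_self A)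

variable {A : Matrix (Fin d) (Fin d) ℝ}

lemma msgn_eq_mul_inv_matAbs (A : Matrix (Fin d) (Fin d) ℝ) : msgn A = A * (matAbs A)⁻¹ :=
  dif_pos (posSemidef_transpose_mul_self A)

lemma transpose_matAbs (A : Matrix (Fin d) (Fin d) ℝ) : (matAbs A)ᵀ = matAbs A :=
  transpose_psdSqrt _

lemma matAbs_mul_self (A : Matrix (Fin d) (Fin d) ℝ) : matAbs A * matAbs A = Aᵀ * A :=
  psdSqrt_mul_self _

lemma isUnit_det_matAbs (hA : IsUnit A.det) : IsUnit (matAbs A).det := by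
  have h : (matAbs A).det * (matAbs A).det = A.det * A.det := by
    rw [← det_mul, matAbs_mul_self, det_mul, det_transpose]
  exact (isUnit_mul_self_iff.mp (h ▸ hA.mul hA))

lemma transpose_msgn_mul_self (hA : IsUnit A.det) : (msgn A)ᵀ * A = matAbs A := by
  rw [msgn_eq_mul_inv_matAbs, transpose_mul, transpose_nonsing_inv, transpose_matAbs,
    Matrix.mul_assoc, ← matAbs_mul_self, ← Matrix.mul_assoc,
    nonsing_inv_mul _ (isUnit_det_matAbs hA), Matrix.one_mul]

lemma msgn_mul_matAbs (hA : IsUnit A.det) : msgn A * matAbs A = A := by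
  rw [msgn_eq_mul_inv_matAbs, Matrix.mul_assoc, nonsing_inv_mul _ (isUnit_det_matAbs hA),
    Matrix.mul_one]

lemma isOrtho_msgn (hA : IsUnit A.det) : IsOrtho (msgn A) := by
  refine isOrtho_of_transpose_mul_self ?_
  calc (msgn A)ᵀ * msgn A = (msgn A)ᵀ * A * (matAbs A)⁻¹ := by
        rw [Matrix.mul_assoc, ← msgn_eq_mul_inv_matAbs]
    _ = 1 := by rw [transpose_msgn_mul_self hA, mul_nonsing_inv _ (isUnit_det_matAbs hA)]

lemma trace_mul_le_trace_of_posSemidef {U P : Matrix (Fin d) (Fin d) ℝ} (hU : IsOrtho U)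
    (hP : P.PosSemidef) : trace (U * P) ≤ trace P := by
  set S := psdSqrt hP
  have hS : S * S = P := psdSqrt_mul_self hP
  calc trace (U * P) = trace ((U * S) * S) := by rw [Matrix.mul_assoc, hS]
    _ ≤ frob (U * S) * frob S := trace_mul_le_frob_mul_frob _ _
    _ = trace P := by
      rw [frob_mul_left_of_transpose_mul_self hU.1, ← sq, sq_frob_eq_trace, transpose_psdSqrt, hS]

lemma trace_transpose_mul_le_trace_matAbs (hA : IsUnit A.det) {R : Matrix (Fin d) (Fin d) ℝ}
    (hR : IsOrtho R) : trace (Rᵀ * A) ≤ trace (matAbs A) := by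
  calc trace (Rᵀ * A) = trace ((Rᵀ * msgn A) * matAbs A) := by
        rw [Matrix.mul_assoc, msgn_mul_matAbs hA]
    _ ≤ trace (matAbs A) :=
      trace_mul_le_trace_of_posSemidef (hR.transpose.mul (isOrtho_msgn hA)) (posSemidef_psdSqrt _)

end MatrixSign

section Procrustes

variable {m : Type*} [Fintype m] {d : ℕ}

lemma sq_frob_sub_mul {R : Matrix (Fin d) (Fin d) ℝ} (hR : R * Rᵀ = 1) (X Y : Matrix m (Fin d) ℝ) :
    frob (X - Y * R) ^ 2 = trace (Xᵀ * X) + trace (Yᵀ * Y) - 2 * trace (Rᵀ * (Yᵀ * X)) := by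
  have hcross : trace (Xᵀ * (Y * R)) = trace (Rᵀ * (Yᵀ * X)) := by
    rw [← trace_transpose]; simp [transpose_mul, Matrix.mul_assoc]
  have hsq : trace (Rᵀ * Yᵀ * (Y * R)) = trace (Yᵀ * Y) := by
    rw [Matrix.mul_assoc, trace_mul_comm, Matrix.mul_assoc, Matrix.mul_assoc, hR, Matrix.mul_one]
  rw [sq_frob_eq_trace, transpose_sub, transpose_mul, Matrix.sub_mul, Matrix.mul_sub,
    Matrix.mul_sub, trace_sub, trace_sub, trace_sub, hcross, hsq, Matrix.mul_assoc]
  ring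

lemma frob_sub_mul_msgn_le {X Y : Matrix m (Fin d) ℝ} (hA : IsUnit (Yᵀ * X).det)
    {R : Matrix (Fin d) (Fin d) ℝ} (hR : IsOrtho R) :
    frob (X - Y * msgn (Yᵀ * X)) ≤ frob (X - Y * R) := by
  refine (pow_le_pow_iff_left₀ (frob_nonneg _) (frob_nonneg _) two_ne_zero).mp ?_
  rw [sq_frob_sub_mul (isOrtho_msgn hA).2, sq_frob_sub_mul hR.2, transpose_msgn_mul_self hA]
  linarith [trace_transpose_mul_le_trace_matAbs hA hR]

lemma frob_transpose_mul_sub_le {X Y : Matrix m (Fin d) ℝ} {c : ℝ} (hX : Xᵀ * X = c • 1)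
    (hY : Yᵀ * Y = c • 1) {Q : Matrix (Fin d) (Fin d) ℝ} (hQ : IsOrtho Q)
    (hsymm : (Qᵀ * (Yᵀ * X))ᵀ = Qᵀ * (Yᵀ * X)) :
    frob (Yᵀ * (X - Y * Q)) ≤ frob (X - Y * Q) ^ 2 / 2 := by
  set B := Qᵀ * (Yᵀ * X)
  have hres : Yᵀ * (X - Y * Q) = Q * (B - c • 1) := by
    rw [Matrix.mul_sub, ← Matrix.mul_assoc, hY, Matrix.mul_sub, ← Matrix.mul_assoc, hQ.2,
      Matrix.one_mul, Matrix.smul_mul, Matrix.mul_smul, Matrix.one_mul, Matrix.mul_one]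
  have hgram : (X - Y * Q)ᵀ * (X - Y * Q) = (-2 : ℝ) • (B - c • 1) := by
    have hXYQ : Xᵀ * (Y * Q) = B := by
      rw [← hsymm]; simp [B, transpose_mul, Matrix.mul_assoc]
    rw [transpose_sub, transpose_mul, Matrix.sub_mul, Matrix.mul_sub, Matrix.mul_sub, hX, hXYQ,
      Matrix.mul_assoc Qᵀ Yᵀ (Y * Q), ← Matrix.mul_assoc Yᵀ Y Q, hY, Matrix.smul_mul,
      Matrix.one_mul, Matrix.mul_smul, hQ.1, Matrix.mul_assoc Qᵀ Yᵀ X]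
    module
  calc frob (Yᵀ * (X - Y * Q)) = frob (B - c • 1) := by
        rw [hres, frob_mul_left_of_transpose_mul_self hQ.1]
    _ = frob ((X - Y * Q)ᵀ * (X - Y * Q)) / 2 := by rw [hgram, frob_smul]; norm_num
    _ ≤ frob (X - Y * Q) ^ 2 / 2 := by
      grw [frob_mul_le, frob_transpose, sq]

lemma frob_transpose_mul_sub_mul_msgn_le {X Y Z : Matrix m (Fin d) ℝ} {c : ℝ}
    (hX : Xᵀ * X = c • 1) (hY : Yᵀ * Y = c • 1) (hA : IsUnit (Yᵀ * X).det)
    {Q : Matrix (Fin d) (Fin d) ℝ} (hQ : IsOrtho Q) :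
    frob (Zᵀ * (X - Y * msgn (Yᵀ * X))) ≤
      frob (Z - Y * Q) * frob (X - Y * msgn (Yᵀ * X)) + frob (X - Y * msgn (Yᵀ * X)) ^ 2 / 2 := by
  set Δ := X - Y * msgn (Yᵀ * X)
  have hsplit : Zᵀ * Δ = (Z - Y * Q)ᵀ * Δ + Qᵀ * (Yᵀ * Δ) := by
    rw [transpose_sub, transpose_mul, Matrix.sub_mul, Matrix.mul_assoc]; abel
  have hsymm : ((msgn (Yᵀ * X))ᵀ * (Yᵀ * X))ᵀ = (msgn (Yᵀ * X))ᵀ * (Yᵀ * X) := by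
    rw [transpose_msgn_mul_self hA, transpose_matAbs]
  calc frob (Zᵀ * Δ) ≤ frob ((Z - Y * Q)ᵀ * Δ) + frob (Qᵀ * (Yᵀ * Δ)) := hsplit ▸ frob_add_le _ _
    _ ≤ frob (Z - Y * Q) * frob Δ + frob Δ ^ 2 / 2 := by
      rw [frob_mul_left_of_transpose_mul_self (by simpa using hQ.2)]
      grw [frob_mul_le, frob_transpose,
        frob_transpose_mul_sub_le hX hY (isOrtho_msgn hA) hsymm]

end Procrustes

section Invertibility

variable {m k : Type*} [Fintype m] [Fintype k] {d : ℕ}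

lemma sq_dotProduct_le (v w : k → ℝ) : (v ⬝ᵥ w) ^ 2 ≤ (v ⬝ᵥ v) * (w ⬝ᵥ w) := by
  simpa only [dotProduct, sq] using Finset.sum_mul_sq_le_sq_mul_sq Finset.univ v w

lemma mulVec_dotProduct (A : Matrix m k ℝ) (v : k → ℝ) (w : m → ℝ) :
    (A *ᵥ v) ⬝ᵥ w = v ⬝ᵥ (Aᵀ *ᵥ w) := by
  rw [dotProduct_comm, dotProduct_mulVec, ← mulVec_transpose, dotProduct_comm]

lemma dotProduct_mulVec_self_of_transpose_mul_self [DecidableEq k] {X : Matrix m k ℝ} {c : ℝ}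
    (hX : Xᵀ * X = c • 1) (v : k → ℝ) : (X *ᵥ v) ⬝ᵥ (X *ᵥ v) = c * (v ⬝ᵥ v) := by
  rw [mulVec_dotProduct, mulVec_mulVec, hX, smul_mulVec, one_mulVec, dotProduct_smul,
    smul_eq_mul]

lemma le_dotProduct_transpose_mul_mulVec {X Y Z : Matrix m (Fin d) ℝ} {c : ℝ} (hc : 0 ≤ c)
    (hY : Yᵀ * Y = c • 1) (hZ : Zᵀ * Z = c • 1) {Q₁ Q₂ : Matrix (Fin d) (Fin d) ℝ}
    (hQ₁ : IsOrtho Q₁) (hQ₂ : IsOrtho Q₂) (u : Fin d → ℝ) :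
    (c - frob (Z - Y * Q₂) ^ 2 / 2 - Real.sqrt c * frob (X - Z * Q₁)) * (u ⬝ᵥ u) ≤
      (Q₂ *ᵥ (Q₁ *ᵥ u)) ⬝ᵥ ((Yᵀ * X) *ᵥ u) := by
  set E := X - Z * Q₁
  set G := Z - Y * Q₂
  set v := Q₁ *ᵥ u
  set w := Q₂ *ᵥ v
  set s := u ⬝ᵥ u
  have hs : 0 ≤ s := Finset.sum_nonneg fun _ _ => mul_self_nonneg _
  have hv : v ⬝ᵥ v = s := by
    rw [dotProduct_mulVec_self_of_transpose_mul_self (c := 1) (by rw [one_smul, hQ₁.1]), one_mul]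
  have hw : w ⬝ᵥ w = s := by
    rw [dotProduct_mulVec_self_of_transpose_mul_self (c := 1) (by rw [one_smul, hQ₂.1]), one_mul,
      hv]
  have hZv : Z *ᵥ v = Y *ᵥ w + G *ᵥ v := by
    simp only [G, w, sub_mulVec, mulVec_mulVec]; abel
  have hXu : X *ᵥ u = Z *ᵥ v + E *ᵥ u := by
    simp only [E, v, sub_mulVec, mulVec_mulVec]; abel
  have hYw : (Y *ᵥ w) ⬝ᵥ (Y *ᵥ w) = c * s := by
    rw [dotProduct_mulVec_self_of_transpose_mul_self hY, hw]
  -- `Yw + Gv = Zv` has the same length as `Yw`, so `Yw ⬝ᵥ Gv = -|Gv|² / 2`.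
  have hYG : 2 * ((Y *ᵥ w) ⬝ᵥ (G *ᵥ v)) = -((G *ᵥ v) ⬝ᵥ (G *ᵥ v)) := by
    have h := dotProduct_mulVec_self_of_transpose_mul_self hZ v
    rw [hZv, hv, add_dotProduct, dotProduct_add, dotProduct_add, hYw,
      dotProduct_comm (G *ᵥ v)] at h
    linarith
  have hGv : (G *ᵥ v) ⬝ᵥ (G *ᵥ v) ≤ frob G ^ 2 * s := hv ▸ dotProduct_mulVec_self_le G v
  have hYE : -(Real.sqrt c * frob E * s) ≤ (Y *ᵥ w) ⬝ᵥ (E *ᵥ u) := by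
    refine (abs_le_of_sq_le_sq' ?_ (by positivity [frob_nonneg E])).1
    calc ((Y *ᵥ w) ⬝ᵥ (E *ᵥ u)) ^ 2 ≤ (c * s) * (frob E ^ 2 * s) :=
          hYw ▸ (sq_dotProduct_le _ _).trans (mul_le_mul_of_nonneg_left
            (dotProduct_mulVec_self_le E u) (Finset.sum_nonneg fun _ _ => mul_self_nonneg _))
      _ = (Real.sqrt c * frob E * s) ^ 2 := by
          rw [mul_pow, mul_pow, Real.sq_sqrt hc]; ring
  rw [← mulVec_mulVec, ← mulVec_dotProduct, hXu, hZv, dotProduct_add, dotProduct_add, hYw]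
  nlinarith

lemma isUnit_det_transpose_mul {X Y Z : Matrix m (Fin d) ℝ} {c : ℝ}
    (hY : Yᵀ * Y = c • 1) (hZ : Zᵀ * Z = c • 1) {Q₁ Q₂ : Matrix (Fin d) (Fin d) ℝ}
    (hQ₁ : IsOrtho Q₁) (hQ₂ : IsOrtho Q₂)
    (hclose : frob (Z - Y * Q₂) ^ 2 / 2 + Real.sqrt c * frob (X - Z * Q₁) < c) :
    IsUnit (Yᵀ * X).det := by
  have hc : 0 ≤ c := by nlinarith [frob_nonneg (X - Z * Q₁), Real.sqrt_nonneg c]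
  rw [isUnit_iff_ne_zero]
  intro hdet
  obtain ⟨u, hu0, hu⟩ := exists_mulVec_eq_zero_iff.mpr hdet
  have hbound := le_dotProduct_transpose_mul_mulVec (X := X) hc hY hZ hQ₁ hQ₂ u
  rw [hu, dotProduct_zero] at hbound
  have hs : 0 < u ⬝ᵥ u := by simpa using dotProduct_self_star_pos_iff.mpr hu0
  nlinarith

end Invertibility

section AlignmentDistance

variable {n d : ℕ}

lemma dF_nonneg (X Y : Matrix (Fin n × Fin d) (Fin d) ℝ) : 0 ≤ dF X Y :=
  le_ciInf fun _ => frob_nonneg _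

lemma dF_le {X Y : Matrix (Fin n × Fin d) (Fin d) ℝ} {Q : Matrix (Fin d) (Fin d) ℝ}
    (hQ : IsOrtho Q) : dF X Y ≤ frob (X - Y * Q) :=
  ciInf_le (f := fun R : {Q // IsOrtho Q} => frob (X - Y * R.1))
    ⟨0, Set.forall_mem_range.mpr fun _ => frob_nonneg _⟩ ⟨Q, hQ⟩

lemma exists_isOrtho_dF_eq (X Y : Matrix (Fin n × Fin d) (Fin d) ℝ) :
    ∃ Q : Matrix (Fin d) (Fin d) ℝ, IsOrtho Q ∧ dF X Y = frob (X - Y * Q) := by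
  have hcont : Continuous fun Q : Matrix (Fin d) (Fin d) ℝ => frob (X - Y * Q) := by
    unfold frob; fun_prop
  obtain ⟨Q, hQ, hmin⟩ :=
    isCompact_setOf_isOrtho.exists_isMinOn ⟨1, isOrtho_one⟩ hcont.continuousOn
  exact ⟨Q, hQ, le_antisymm (dF_le hQ) (le_ciInf fun R => hmin R.2)⟩

lemma dF_comm (X Y : Matrix (Fin n × Fin d) (Fin d) ℝ) : dF X Y = dF Y X := by
  have key : ∀ X Y : Matrix (Fin n × Fin d) (Fin d) ℝ, dF X Y ≤ dF Y X := fun X Y => by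
    obtain ⟨Q, hQ, h⟩ := exists_isOrtho_dF_eq Y X
    calc dF X Y ≤ frob (X - Y * Qᵀ) := dF_le hQ.transpose
      _ = dF Y X := by rw [h, frob_sub_mul_comm hQ.transpose, transpose_transpose]
  exact le_antisymm (key X Y) (key Y X)

lemma dF_le_add (X Y Z : Matrix (Fin n × Fin d) (Fin d) ℝ) : dF X Y ≤ dF X Z + dF Z Y := by
  obtain ⟨Q₁, hQ₁, h₁⟩ := exists_isOrtho_dF_eq X Z
  obtain ⟨Q₂, hQ₂, h₂⟩ := exists_isOrtho_dF_eq Z Y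
  calc dF X Y ≤ frob (X - Y * (Q₂ * Q₁)) := dF_le (hQ₂.mul hQ₁)
    _ = frob ((X - Z * Q₁) + (Z - Y * Q₂) * Q₁) := by
      rw [Matrix.sub_mul, Matrix.mul_assoc]; abel_nf
    _ ≤ frob (X - Z * Q₁) + frob ((Z - Y * Q₂) * Q₁) := frob_add_le _ _
    _ = dF X Z + dF Z Y := by rw [frob_mul_right_of_mul_transpose_self hQ₁.2, h₁, h₂]

lemma BlockOrtho.transpose_mul_self {X : Matrix (Fin n × Fin d) (Fin d) ℝ} (hX : BlockOrtho X) :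
    Xᵀ * X = (n : ℝ) • 1 := by
  ext a b
  have hblock : ∀ i, ∑ c, X (i, c) a * X (i, c) b = (1 : Matrix (Fin d) (Fin d) ℝ) a b :=
    fun i => by simpa [blk, Matrix.mul_apply] using congrFun₂ (hX i).1 a b
  simp [Matrix.mul_apply, ← Finset.univ_product_univ, Finset.sum_product, hblock]

lemma dF_eq_frob_sub_mul_msgn {X Y : Matrix (Fin n × Fin d) (Fin d) ℝ}
    (hA : IsUnit (Yᵀ * X).det) : dF X Y = frob (X - Y * msgn (Yᵀ * X)) :=
  le_antisymm (dF_le (isOrtho_msgn hA)) (le_ciInf fun R => frob_sub_mul_msgn_le hA R.2)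

lemma isUnit_det_transpose_mul_of_dF_le {X Y Z : Matrix (Fin n × Fin d) (Fin d) ℝ} (hn : 0 < n)
    (hY : BlockOrtho Y) (hZ : BlockOrtho Z) {ε : ℝ} (hε : ε ≤ 1 / Real.sqrt 2)
    (hXZ : dF X Z ≤ ε * Real.sqrt n) (hZY : dF Z Y ≤ ε * Real.sqrt n) :
    IsUnit (Yᵀ * X).det := by
  obtain ⟨Q₁, hQ₁, h₁⟩ := exists_isOrtho_dF_eq X Z
  obtain ⟨Q₂, hQ₂, h₂⟩ := exists_isOrtho_dF_eq Z Y
  refine isUnit_det_transpose_mul hY.transpose_mul_self hZ.transpose_mul_self hQ₁ hQ₂ ?_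
  rw [← h₁, ← h₂]
  have hsn : 0 < Real.sqrt n := Real.sqrt_pos.mpr (by exact_mod_cast hn)
  have hn' : Real.sqrt n ^ 2 = n := Real.sq_sqrt (Nat.cast_nonneg n)
  have hε0 : 0 ≤ ε := nonneg_of_mul_nonneg_left ((dF_nonneg Z Y).trans hZY) hsn
  have hε' : ε * Real.sqrt 2 ≤ 1 := by rwa [le_div_iff₀ (by positivity)] at hε
  have hs2 : Real.sqrt 2 ^ 2 = 2 := Real.sq_sqrt zero_le_two
  -- `ε ≤ 1/√2` gives `ε² ≤ 1/2` and `ε < 3/4`, and `1/4 + 3/4 = 1`.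
  have hεsq : ε ^ 2 ≤ 1 / 2 := by
    have h := pow_le_pow_left₀ (by positivity) hε' 2
    rw [mul_pow, hs2, one_pow] at h
    linarith
  have hε34 : ε < 3 / 4 := by nlinarith [Real.sqrt_nonneg 2]
  have h₂sq : dF Z Y ^ 2 ≤ ε ^ 2 * n :=
    calc dF Z Y ^ 2 ≤ (ε * Real.sqrt n) ^ 2 := pow_le_pow_left₀ (dF_nonneg Z Y) hZY 2
      _ = ε ^ 2 * n := by rw [mul_pow, hn']
  have h₁n : Real.sqrt n * dF X Z ≤ ε * n :=
    calc Real.sqrt n * dF X Z ≤ Real.sqrt n * (ε * Real.sqrt n) :=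
          mul_le_mul_of_nonneg_left hXZ hsn.le
      _ = ε * Real.sqrt n ^ 2 := by ring
      _ = ε * n := by rw [hn']
  nlinarith

end AlignmentDistance

/-- If `X, Y ∈ O(d)^{⊗n}` both lie in `N_ε` around the ground truth
`Z ∈ O(d)^{⊗n}`, `Q = sgn(YᵀX)`, and `ε ≤ 1/√2`, then
`‖Zᵀ(X - YQ)‖_F ≤ 2ε√n · d_F(X, Y)`. -/
theorem aligned_difference_bound {d n : ℕ} (Z X Y : Matrix (Fin n × Fin d) (Fin d) ℝ)
    (hZ : BlockOrtho Z) (hX : BlockOrtho X) (hY : BlockOrtho Y)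
    (ε : ℝ) (hε : ε ≤ 1 / Real.sqrt 2)
    (hXN : dF X Z ≤ ε * Real.sqrt n) (hYN : dF Y Z ≤ ε * Real.sqrt n) :
    frob (Zᵀ * (X - Y * msgn (Yᵀ * X))) ≤ 2 * ε * Real.sqrt n * dF X Y := by
  rcases Nat.eq_zero_or_pos n with rfl | hn
  · simp [frob, Matrix.mul_apply]
  have hZY : dF Z Y ≤ ε * Real.sqrt n := dF_comm Z Y ▸ hYN
  have hA := isUnit_det_transpose_mul_of_dF_le hn hY hZ hε hXN hZY
  obtain ⟨Q, hQ, hZYQ⟩ := exists_isOrtho_dF_eq Z Y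
  have hD : dF X Y ≤ 2 * (ε * Real.sqrt n) := (dF_le_add X Y Z).trans (by linarith)
  calc frob (Zᵀ * (X - Y * msgn (Yᵀ * X))) ≤ dF Z Y * dF X Y + dF X Y ^ 2 / 2 := by
        rw [hZYQ, dF_eq_frob_sub_mul_msgn hA]
        exact frob_transpose_mul_sub_mul_msgn_le hX.transpose_mul_self hY.transpose_mul_self hA hQ
    _ ≤ ε * Real.sqrt n * dF X Y + 2 * (ε * Real.sqrt n) * dF X Y / 2 := by
        have := dF_nonneg X Y
        gcongr
        rw [sq]; gcongr
    _ = 2 * ε * Real.sqrt n * dF X Y := by ring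

end
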